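/- Let A be a finite set and φ: A^ω → ℝ a continuous prefix-monotone payoff. Define ψ: A^ω → ℝ by ψ(γ) = Σ_{w ∈ A*} (1/(|A|+1))^{|w|} · φ(wγ). Then ψ is well-defined (the series converges absolutely), continuous, prefix-monotone, and shift-deterministic; moreover there exists a non-decreasing function g: ψ(A^ω) → ℝ with |g(x) − g(y)| ≤ |x − y| for all x,y ∈ ψ(A^ω) such that φ = g ∘ ψ. -/

import Mathlib

/-!
By prefix-monotonicity, for any two tails `β, γ` all comparisons between `φ(uβ)` and `φ(uγ)`
go the same way, say `φ(uβ) ≤ φ(uγ)` for every `u`. Then `ψ(γ) - ψ(β)` is a series of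
nonnegative terms whose `w = []` term is `φ(γ) - φ(β)`. Hence `ψ` orders tails as `φ` does,
it dominates the differences of `φ` (so `φ` factors through `ψ` by a non-decreasing
1-Lipschitz map), and `ψ(β) = ψ(γ)` forces `φ(uβ) = φ(uγ)` for every `u`, which gives
shift-determinacy. The weight `(|A| + 1)^{-|w|}` beats the `|A|^k` words of length `k`.
-/

open Filter Topology

/-- Concatenation of a finite word with an infinite word. -/
def wcat {A : Type*} (u : List A) (β : ℕ → A) : ℕ → A :=
  fun n => if h : n < u.length then u.get ⟨n, h⟩ else β (n - u.length)

/-- A payoff is prefix-monotone if there are no finite words `u, v` and infinite words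
`β, γ` with `φ(uβ) > φ(uγ)` and `φ(vβ) < φ(vγ)`. -/
def PrefixMonotone {A : Type*} (φ : (ℕ → A) → ℝ) : Prop :=
  ¬ ∃ (u v : List A) (β γ : ℕ → A),
      φ (wcat u β) > φ (wcat u γ) ∧ φ (wcat v β) < φ (wcat v γ)

/-- A payoff is shift-deterministic if `φ(β) = φ(γ)` implies `φ(aβ) = φ(aγ)`. -/
def ShiftDet {A : Type*} (φ : (ℕ → A) → ℝ) : Prop :=
  ∀ (a : A) (β γ : ℕ → A), φ β = φ γ → φ (wcat [a] β) = φ (wcat [a] γ)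

lemma wcat_nil {A : Type*} (β : ℕ → A) : wcat [] β = β := by
  funext n; simp [wcat]

lemma wcat_wcat {A : Type*} (u v : List A) (β : ℕ → A) :
    wcat u (wcat v β) = wcat (u ++ v) β := by
  funext n
  simp only [wcat, List.length_append, List.get_eq_getElem]
  by_cases h1 : n < u.length
  · rw [dif_pos h1, dif_pos (by omega), List.getElem_append_left h1]
  · rw [dif_neg h1]
    by_cases h2 : n - u.length < v.length
    · rw [dif_pos h2, dif_pos (by omega), List.getElem_append_right (by omega)]
    · rw [dif_neg h2, dif_neg (by omega)]
      congr 1; omega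

lemma continuous_wcat {A : Type*} [TopologicalSpace A] (u : List A) :
    Continuous (wcat u) := by
  refine continuous_pi fun n => ?_
  by_cases h : n < u.length
  · simpa [wcat, h] using continuous_const
  · simpa [wcat, h] using continuous_apply (n - u.length)

lemma summable_pow_length {A : Type*} [Fintype A] {r : ℝ} (hr : 0 ≤ r)
    (h : Fintype.card A * r < 1) : Summable fun w : List A => r ^ w.length := by
  rw [← List.equivSigmaTuple.symm.summable_iff]
  refine (summable_sigma_of_nonneg fun _ => pow_nonneg hr _).2 ⟨fun _ => .of_finite, ?_⟩
  simpa [List.equivSigmaTuple, Function.comp_def, mul_pow]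
    using summable_geometric_of_lt_one (by positivity) h

section PrefixSum

variable {A : Type*} {r C : ℝ} {φ : (ℕ → A) → ℝ} {β γ : ℕ → A}

def PrefixSummable (r : ℝ) (φ : (ℕ → A) → ℝ) : Prop :=
  ∀ γ : ℕ → A, Summable fun w : List A => r ^ w.length * φ (wcat w γ)

noncomputable def prefixSum (r : ℝ) (φ : (ℕ → A) → ℝ) (γ : ℕ → A) : ℝ :=
  ∑' w : List A, r ^ w.length * φ (wcat w γ)

lemma norm_pow_length_mul_le (hr : 0 ≤ r) (hC : ∀ γ, ‖φ γ‖ ≤ C) (w : List A)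
    (γ : ℕ → A) :
    ‖r ^ w.length * φ (wcat w γ)‖ ≤ r ^ w.length * C := by
  rw [norm_mul, norm_pow, Real.norm_of_nonneg hr]
  exact mul_le_mul_of_nonneg_left (hC _) (by positivity)

lemma prefixSummable_of_norm_le [Fintype A] (hr : 0 ≤ r) (hrA : Fintype.card A * r < 1)
    (hC : ∀ γ, ‖φ γ‖ ≤ C) : PrefixSummable r φ := fun γ =>
  .of_norm_bounded ((summable_pow_length hr hrA).mul_right C)
    fun w => norm_pow_length_mul_le hr hC w γ

lemma continuous_prefixSum [Fintype A] [TopologicalSpace A] (hr : 0 ≤ r)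
    (hrA : Fintype.card A * r < 1) (hC : ∀ γ, ‖φ γ‖ ≤ C) (hφ : Continuous φ) :
    Continuous (prefixSum r φ) :=
  continuous_tsum (fun w => continuous_const.mul (hφ.comp (continuous_wcat w)))
    ((summable_pow_length hr hrA).mul_right C) (norm_pow_length_mul_le hr hC)

lemma prefixSum_le_prefixSum (hr : 0 ≤ r) (hs : PrefixSummable r φ)
    (h : ∀ u, φ (wcat u β) ≤ φ (wcat u γ)) :
    prefixSum r φ β ≤ prefixSum r φ γ :=
  (hs β).tsum_le_tsum (fun w => mul_le_mul_of_nonneg_left (h w) (by positivity)) (hs γ)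

lemma sub_le_prefixSum_sub (hr : 0 ≤ r) (hs : PrefixSummable r φ)
    (h : ∀ u, φ (wcat u β) ≤ φ (wcat u γ)) :
    φ γ - φ β ≤ prefixSum r φ γ - prefixSum r φ β := by
  have hdiff : prefixSum r φ γ - prefixSum r φ β =
      ∑' w : List A, r ^ w.length * (φ (wcat w γ) - φ (wcat w β)) := by
    simp only [prefixSum, mul_sub, ((hs γ).tsum_sub (hs β))]
  have := ((hs γ).sub (hs β)).le_tsum [] fun w _ => by
    rw [← mul_sub]; exact mul_nonneg (by positivity) (sub_nonneg.2 (h w))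
  simpa [hdiff, wcat_nil, mul_sub] using this

lemma eq_of_forall_le_of_prefixSum_eq (hr : 0 < r) (hs : PrefixSummable r φ)
    (h : ∀ u, φ (wcat u β) ≤ φ (wcat u γ))
    (heq : prefixSum r φ β = prefixSum r φ γ) (u : List A) :
    φ (wcat u β) = φ (wcat u γ) := by
  refine (h u).eq_of_not_lt fun hlt => heq.not_lt ?_
  exact (hs β).tsum_lt_tsum (i := u) (fun w => mul_le_mul_of_nonneg_left (h w) (by positivity))
    (mul_lt_mul_of_pos_left hlt (by positivity)) (hs γ)

end PrefixSum

namespace PrefixMonotone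

variable {A : Type*} {r : ℝ} {φ : (ℕ → A) → ℝ}

lemma forall_le_or_forall_le (hpm : PrefixMonotone φ) (β γ : ℕ → A) :
    (∀ u, φ (wcat u β) ≤ φ (wcat u γ)) ∨ ∀ u, φ (wcat u γ) ≤ φ (wcat u β) := by
  by_contra! ⟨⟨u, hu⟩, ⟨v, hv⟩⟩
  exact hpm ⟨u, v, β, γ, hu, hv⟩

lemma eq_of_prefixSum_eq (hpm : PrefixMonotone φ) (hr : 0 < r)
    (hs : PrefixSummable r φ) {β γ : ℕ → A}
    (heq : prefixSum r φ β = prefixSum r φ γ) (u : List A) :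
    φ (wcat u β) = φ (wcat u γ) := by
  rcases hpm.forall_le_or_forall_le β γ with h | h
  · exact eq_of_forall_le_of_prefixSum_eq hr hs h heq u
  · exact (eq_of_forall_le_of_prefixSum_eq hr hs h heq.symm u).symm

lemma le_of_prefixSum_le (hpm : PrefixMonotone φ) (hr : 0 < r)
    (hs : PrefixSummable r φ) {β γ : ℕ → A}
    (hle : prefixSum r φ β ≤ prefixSum r φ γ) : φ β ≤ φ γ := by
  rcases hpm.forall_le_or_forall_le β γ with h | h
  · simpa [wcat_nil] using h []
  · have heq := hle.antisymm (prefixSum_le_prefixSum hr.le hs h)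
    simpa [wcat_nil] using (hpm.eq_of_prefixSum_eq hr hs heq []).le

lemma abs_sub_le_abs_prefixSum_sub (hpm : PrefixMonotone φ) (hr : 0 ≤ r)
    (hs : PrefixSummable r φ) (β γ : ℕ → A) :
    |φ β - φ γ| ≤ |prefixSum r φ β - prefixSum r φ γ| := by
  rcases hpm.forall_le_or_forall_le β γ with h | h
  · have hφ : φ β ≤ φ γ := by simpa [wcat_nil] using h []
    rw [abs_sub_comm, abs_of_nonneg (sub_nonneg.2 hφ), abs_sub_comm,
      abs_of_nonneg (sub_nonneg.2 (prefixSum_le_prefixSum hr hs h))]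
    exact sub_le_prefixSum_sub hr hs h
  · have hφ : φ γ ≤ φ β := by simpa [wcat_nil] using h []
    rw [abs_of_nonneg (sub_nonneg.2 hφ),
      abs_of_nonneg (sub_nonneg.2 (prefixSum_le_prefixSum hr hs h))]
    exact sub_le_prefixSum_sub hr hs h

protected lemma prefixSum (hpm : PrefixMonotone φ) (hr : 0 ≤ r)
    (hs : PrefixSummable r φ) :
    PrefixMonotone (prefixSum r φ) := by
  rintro ⟨u, v, β, γ, hu, hv⟩
  rcases hpm.forall_le_or_forall_le β γ with h | h
  · refine hu.not_ge (prefixSum_le_prefixSum hr hs fun w => ?_)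
    simpa only [wcat_wcat] using h (w ++ u)
  · refine hv.not_ge (prefixSum_le_prefixSum hr hs fun w => ?_)
    simpa only [wcat_wcat] using h (w ++ v)

lemma shiftDet_prefixSum (hpm : PrefixMonotone φ) (hr : 0 < r)
    (hs : PrefixSummable r φ) :
    ShiftDet (prefixSum r φ) := by
  intro a β γ heq
  simp only [prefixSum, wcat_wcat, hpm.eq_of_prefixSum_eq hr hs heq]

end PrefixMonotone

lemma exists_monotoneOn_factor {X : Type*} {f h : X → ℝ}
    (hmono : ∀ x y, h x ≤ h y → f x ≤ f y) (hlip : ∀ x y, |f x - f y| ≤ |h x - h y|) :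
    ∃ g : ℝ → ℝ, MonotoneOn g (Set.range h) ∧
      (∀ s ∈ Set.range h, ∀ t ∈ Set.range h, |g s - g t| ≤ |s - t|) ∧
      ∀ x, f x = g (h x) := by
  have hfac : Function.FactorsThrough f h := fun x y hxy =>
    (hmono x y hxy.le).antisymm (hmono y x hxy.ge)
  refine ⟨Function.extend h f 0, ?_, ?_, fun x => (hfac.extend_apply 0 x).symm⟩
  · rintro _ ⟨x, rfl⟩ _ ⟨y, rfl⟩ hxy
    simpa only [hfac.extend_apply] using hmono x y hxy
  · rintro _ ⟨x, rfl⟩ _ ⟨y, rfl⟩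
    simpa only [hfac.extend_apply] using hlip x y

theorem phi_to_psi_general
    {A : Type*} [Fintype A] [TopologicalSpace A] [DiscreteTopology A]
    (φ : (ℕ → A) → ℝ) (hcont : Continuous φ) (hpm : PrefixMonotone φ)
    (ψ : (ℕ → A) → ℝ)
    (hψ : ∀ γ : ℕ → A,
      ψ γ = ∑' w : List A,
        (1 / ((Fintype.card A : ℝ) + 1)) ^ w.length * φ (wcat w γ)) :
    (∀ γ : ℕ → A,
        Summable (fun w : List A =>
          (1 / ((Fintype.card A : ℝ) + 1)) ^ w.length * φ (wcat w γ))) ∧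
    Continuous ψ ∧ PrefixMonotone ψ ∧ ShiftDet ψ ∧
    ∃ g : ℝ → ℝ,
      (∀ x ∈ Set.range ψ, ∀ y ∈ Set.range ψ, x ≤ y → g x ≤ g y) ∧
      (∀ x ∈ Set.range ψ, ∀ y ∈ Set.range ψ, |g x - g y| ≤ |x - y|) ∧
      (∀ γ : ℕ → A, φ γ = g (ψ γ)) := by
  set r : ℝ := 1 / ((Fintype.card A : ℝ) + 1)
  have hr : 0 < r := by positivity
  have hrA : Fintype.card A * r < 1 := by
    rw [mul_one_div, div_lt_one (by positivity)]; linarith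
  obtain ⟨C, hC⟩ := hcont.bounded_above_of_compact_support (.of_compactSpace φ)
  have hs := prefixSummable_of_norm_le hr.le hrA hC
  obtain rfl : ψ = prefixSum r φ := funext hψ
  obtain ⟨g, hg_mono, hg_lip, hg⟩ := exists_monotoneOn_factor
    (fun _ _ => hpm.le_of_prefixSum_le hr hs) (hpm.abs_sub_le_abs_prefixSum_sub hr.le hs)
  exact ⟨hs, continuous_prefixSum hr.le hrA hC hcont, hpm.prefixSum hr.le hs,
    hpm.shiftDet_prefixSum hr hs, g, hg_mono, hg_lip, hg⟩

theorem phi_to_psi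
    {A : Type*} [Fintype A] [Nonempty A] [TopologicalSpace A] [DiscreteTopology A]
    (φ : (ℕ → A) → ℝ) (hcont : Continuous φ) (hpm : PrefixMonotone φ)
    (ψ : (ℕ → A) → ℝ)
    (hψ : ∀ γ : ℕ → A,
      ψ γ = ∑' w : List A,
        (1 / ((Fintype.card A : ℝ) + 1)) ^ w.length * φ (wcat w γ)) :
    (∀ γ : ℕ → A,
        Summable (fun w : List A =>
          (1 / ((Fintype.card A : ℝ) + 1)) ^ w.length * φ (wcat w γ))) ∧
    Continuous ψ ∧ PrefixMonotone ψ ∧ ShiftDet ψ ∧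
    ∃ g : ℝ → ℝ,
      (∀ x ∈ Set.range ψ, ∀ y ∈ Set.range ψ, x ≤ y → g x ≤ g y) ∧
      (∀ x ∈ Set.range ψ, ∀ y ∈ Set.range ψ, |g x - g y| ≤ |x - y|) ∧
      (∀ γ : ℕ → A, φ γ = g (ψ γ)) :=
  phi_to_psi_general φ hcont hpm ψ hψ
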